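/- Let 𝒢 be a linear r-graph with underlying graph G and bowtie graph B. For every vertex u, Σ_{b ∈ B_u} d_B(b) = 2·(t_u - C(r-1,2)·d_𝒢(u)), where t_u is the number of triangles of G containing u and B_u is the set of bowties with centre u. -/

import Mathlib

/-!
A pair of adjacent bowties `b, b'` with `b` centred at `u` has the form `{S, T}, {R, T}` with
`S ∩ T = {u}` and `R` meeting `S` and `T` in single vertices `x`, `y` other than `u`; then
`{u, x, y}` is a triangle of `G` lying in no hyperedge. Conversely, by linearity such a triangle
determines the hyperedges `S ∋ u, x`, `T ∋ u, y`, `R ∋ x, y`, and it arises from exactly two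
pairs: the shared hyperedge is either `T` or `S`. The triangles through `u` that do lie in a
hyperedge are the `C(r-1, 2)` triples through `u` inside each hyperedge containing `u`, and
these families are disjoint, again by linearity.
-/

open scoped Classical

/-- A hypergraph (finite set of hyperedges) is linear if any two distinct
hyperedges share at most one vertex. -/
def Linear {V : Type*} [DecidableEq V] (𝒢 : Finset (Finset V)) : Prop :=
  ∀ S ∈ 𝒢, ∀ T ∈ 𝒢, S ≠ T → (S ∩ T).card ≤ 1

/-- A hypergraph is `r`-uniform if every hyperedge has exactly `r` vertices. -/
def Uniform {V : Type*} (r : ℕ) (𝒢 : Finset (Finset V)) : Prop :=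
  ∀ S ∈ 𝒢, S.card = r

/-- A bowtie of `𝒢` is an unordered pair `{S, T}` of distinct hyperedges of `𝒢`
intersecting in exactly one vertex. -/
def IsBowtie {V : Type*} [DecidableEq V] (𝒢 : Finset (Finset V))
    (b : Finset (Finset V)) : Prop :=
  ∃ S T : Finset V, S ∈ 𝒢 ∧ T ∈ 𝒢 ∧ S ≠ T ∧ (S ∩ T).card = 1 ∧ b = {S, T}

/-- The bowtie graph `B(𝒢)`: vertices are the bowties of `𝒢`; bowties
`b₁ = {S₁, T}` and `b₂ = {S₂, T}` are adjacent iff `|S₁ ∩ S₂| = 1` and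
`S₁ ∩ S₂ ∩ T = ∅`. -/
def bowtieGraph {V : Type*} [DecidableEq V] (𝒢 : Finset (Finset V)) :
    SimpleGraph {b : Finset (Finset V) // IsBowtie 𝒢 b} where
  Adj b₁ b₂ := b₁ ≠ b₂ ∧ ∃ S₁ S₂ T : Finset V,
      (b₁ : Finset (Finset V)) = {S₁, T} ∧ (b₂ : Finset (Finset V)) = {S₂, T} ∧
      (S₁ ∩ S₂).card = 1 ∧ S₁ ∩ S₂ ∩ T = ∅
  symm := by
    constructor
    rintro b₁ b₂ ⟨hne, S₁, S₂, T, h₁, h₂, hc, he⟩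
    exact ⟨hne.symm, S₂, S₁, T, h₂, h₁, by rwa [Finset.inter_comm],
      by rwa [Finset.inter_comm S₂ S₁]⟩
  loopless := by constructor; rintro b ⟨hne, -⟩; exact hne rfl

/-- The underlying graph of a hypergraph: `x ~ y` iff `x ≠ y` and some hyperedge
contains both `x` and `y`. -/
def underlyingGraph {V : Type*} (𝒢 : Finset (Finset V)) : SimpleGraph V where
  Adj x y := x ≠ y ∧ ∃ e ∈ 𝒢, x ∈ e ∧ y ∈ e
  symm := by constructor; rintro x y ⟨h, e, he, hx, hy⟩; exact ⟨h.symm, e, he, hy, hx⟩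
  loopless := by constructor; rintro x ⟨h, -⟩; exact h rfl

open Finset

theorem Finset.pair_eq_pair_iff {α : Type*} [DecidableEq α] {x y z w : α} :
    ({x, y} : Finset α) = {z, w} ↔ x = z ∧ y = w ∨ x = w ∧ y = z := by
  rw [← coe_inj, coe_pair, coe_pair, Set.pair_eq_pair_iff]

section

variable {V : Type*} {𝒢 : Finset (Finset V)}

theorem isNClique_of_subset_of_mem {e t : Finset V} {n : ℕ} (he : e ∈ 𝒢) (hte : t ⊆ e)
    (ht : #t = n) : (underlyingGraph 𝒢).IsNClique n t :=
  ⟨fun _ ha _ hb hab => ⟨hab, e, he, hte ha, hte hb⟩, ht⟩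

variable [DecidableEq V]

theorem Linear.eq_of_mem_of_mem (h𝒢 : Linear 𝒢) {e e' : Finset V} (he : e ∈ 𝒢) (he' : e' ∈ 𝒢)
    {x y : V} (hxy : x ≠ y) (hxe : x ∈ e) (hye : y ∈ e) (hxe' : x ∈ e') (hye' : y ∈ e') :
    e = e' := by
  by_contra hne
  have hsub : ({x, y} : Finset V) ⊆ e ∩ e' := by simp [insert_subset_iff, *]
  have := card_le_card hsub
  rw [card_pair hxy] at this
  have := h𝒢 e he e' he' hne
  omega

theorem Linear.inter_eq_singleton (h𝒢 : Linear 𝒢) {e e' : Finset V} (he : e ∈ 𝒢) (he' : e' ∈ 𝒢)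
    (hne : e ≠ e') {x : V} (hxe : x ∈ e) (hxe' : x ∈ e') : e ∩ e' = {x} :=
  (eq_of_subset_of_card_le (singleton_subset_iff.2 (mem_inter.2 ⟨hxe, hxe'⟩))
    (by simpa using h𝒢 e he e' he' hne)).symm

theorem inter_eq_inter_of_pair_eq {A B S T : Finset V}
    (h : ({A, B} : Finset (Finset V)) = {S, T}) : A ∩ B = S ∩ T := by
  rcases pair_eq_pair_iff.1 h with ⟨rfl, rfl⟩ | ⟨rfl, rfl⟩
  · rfl
  · exact inter_comm _ _

theorem isBowtie_pair_iff {S T : Finset V} :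
    IsBowtie 𝒢 {S, T} ↔ S ∈ 𝒢 ∧ T ∈ 𝒢 ∧ S ≠ T ∧ #(S ∩ T) = 1 := by
  refine ⟨?_, fun ⟨hS, hT, hST, h⟩ => ⟨S, T, hS, hT, hST, h, rfl⟩⟩
  rintro ⟨A, B, hA, hB, hAB, hcard, h⟩
  rcases pair_eq_pair_iff.1 h with ⟨rfl, rfl⟩ | ⟨rfl, rfl⟩
  · exact ⟨hA, hB, hAB, hcard⟩
  · exact ⟨hB, hA, hAB.symm, inter_comm S T ▸ hcard⟩

/-- A triple `(S, T, R)` encodes both the adjacent bowties `{S, T}`, `{R, T}` (sharing `T`) and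
the triangle of the underlying graph on `u` and the vertices of `S ∩ R` and `T ∩ R`. -/
def rainbowConfigs (𝒢 : Finset (Finset V)) (u : V) : Finset (Finset V × Finset V × Finset V) :=
  (𝒢 ×ˢ 𝒢 ×ˢ 𝒢).filter fun q =>
    q.1 ∩ q.2.1 = {u} ∧ #(q.1 ∩ q.2.2) = 1 ∧ #(q.2.1 ∩ q.2.2) = 1 ∧ u ∉ q.2.2

theorem mem_rainbowConfigs {u : V} {S T R : Finset V} :
    (S, T, R) ∈ rainbowConfigs 𝒢 u ↔
      S ∈ 𝒢 ∧ T ∈ 𝒢 ∧ R ∈ 𝒢 ∧ S ∩ T = {u} ∧ #(S ∩ R) = 1 ∧ #(T ∩ R) = 1 ∧ u ∉ R := by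
  simp [rainbowConfigs, and_assoc]

def configTriangle (u : V) (q : Finset V × Finset V × Finset V) : Finset V :=
  insert u ((q.1 ∪ q.2.1) ∩ q.2.2)

theorem exists_vertices_of_mem_rainbowConfigs {u : V} {S T R : Finset V}
    (hq : (S, T, R) ∈ rainbowConfigs 𝒢 u) :
    ∃ x y, u ≠ x ∧ u ≠ y ∧ x ≠ y ∧ u ∈ S ∧ u ∈ T ∧ x ∈ S ∧ x ∈ R ∧ y ∈ T ∧ y ∈ R ∧
      configTriangle u (S, T, R) = {u, x, y} := by
  obtain ⟨-, -, -, hST, hSR, hTR, huR⟩ := mem_rainbowConfigs.1 hq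
  obtain ⟨x, hx⟩ := card_eq_one.1 hSR
  obtain ⟨y, hy⟩ := card_eq_one.1 hTR
  obtain ⟨huS, huT⟩ := mem_inter.1 (hST ▸ mem_singleton_self u)
  obtain ⟨hxS, hxR⟩ := mem_inter.1 (hx ▸ mem_singleton_self x)
  obtain ⟨hyT, hyR⟩ := mem_inter.1 (hy ▸ mem_singleton_self y)
  have hxy : x ≠ y := by
    rintro rfl
    have : x ∈ S ∩ T := mem_inter.2 ⟨hxS, hyT⟩
    rw [hST, mem_singleton] at this
    exact huR (this ▸ hxR)
  refine ⟨x, y, fun h => huR (h ▸ hxR), fun h => huR (h ▸ hyR), hxy, huS, huT, hxS, hxR, hyT,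
    hyR, ?_⟩
  rw [configTriangle, union_inter_distrib_right, hx, hy]
  rfl

theorem ne_of_mem_rainbowConfigs {u : V} {S T R : Finset V}
    (hq : (S, T, R) ∈ rainbowConfigs 𝒢 u) : S ≠ T ∧ S ≠ R ∧ T ≠ R := by
  obtain ⟨x, -, hux, -, -, huS, huT, hxS, -⟩ := exists_vertices_of_mem_rainbowConfigs hq
  obtain ⟨-, -, -, hST, -, -, huR⟩ := mem_rainbowConfigs.1 hq
  refine ⟨?_, fun h => huR (h ▸ huS), fun h => huR (h ▸ huT)⟩
  rintro rfl
  rw [inter_self] at hST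
  exact hux (mem_singleton.1 (hST ▸ hxS)).symm

theorem swap_mem_rainbowConfigs {u : V} {S T R : Finset V} (hq : (S, T, R) ∈ rainbowConfigs 𝒢 u) :
    (T, S, R) ∈ rainbowConfigs 𝒢 u := by
  obtain ⟨hS, hT, hR, hST, hSR, hTR, huR⟩ := mem_rainbowConfigs.1 hq
  exact mem_rainbowConfigs.2 ⟨hT, hS, hR, inter_comm S T ▸ hST, hTR, hSR, huR⟩

theorem configTriangle_swap (u : V) (S T R : Finset V) :
    configTriangle u (T, S, R) = configTriangle u (S, T, R) := by
  rw [configTriangle, configTriangle, union_comm]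

theorem eq_or_eq_swap_of_configTriangle_eq (h𝒢 : Linear 𝒢) {u : V} {S T R S' T' R' : Finset V}
    (hq : (S, T, R) ∈ rainbowConfigs 𝒢 u) (hq' : (S', T', R') ∈ rainbowConfigs 𝒢 u)
    (h : configTriangle u (S', T', R') = configTriangle u (S, T, R)) :
    (S', T', R') = (S, T, R) ∨ (S', T', R') = (T, S, R) := by
  obtain ⟨x, y, hux, huy, hxy, huS, huT, hxS, hxR, hyT, hyR, ht⟩ := exists_vertices_of_mem_rainbowConfigs hq
  obtain ⟨x', y', hux', huy', hxy', huS', huT', hxS', hxR', hyT', hyR', ht'⟩ :=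
    exists_vertices_of_mem_rainbowConfigs hq'
  obtain ⟨hS', hT', hR', -⟩ := mem_rainbowConfigs.1 hq'
  obtain ⟨hS, hT, hR, -⟩ := mem_rainbowConfigs.1 hq
  have hpair : ({x', y'} : Finset V) = {x, y} := by
    have := congrArg (erase · u) (ht'.symm.trans (h.trans ht))
    rwa [erase_insert (by simp [hux', huy']), erase_insert (by simp [hux, huy])] at this
  rcases pair_eq_pair_iff.1 hpair with ⟨rfl, rfl⟩ | ⟨rfl, rfl⟩
  · left
    rw [h𝒢.eq_of_mem_of_mem hS' hS hux' huS' hxS' huS hxS,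
      h𝒢.eq_of_mem_of_mem hT' hT huy' huT' hyT' huT hyT,
      h𝒢.eq_of_mem_of_mem hR' hR hxy' hxR' hyR' hxR hyR]
  · right
    rw [h𝒢.eq_of_mem_of_mem hS' hT hux' huS' hxS' huT hyT,
      h𝒢.eq_of_mem_of_mem hT' hS huy' huT' hyT' huS hxS,
      h𝒢.eq_of_mem_of_mem hR' hR hxy' hxR' hyR' hyR hxR]

theorem isBowtie_of_mem_rainbowConfigs {u : V} {S T R : Finset V}
    (hq : (S, T, R) ∈ rainbowConfigs 𝒢 u) : IsBowtie 𝒢 {S, T} ∧ IsBowtie 𝒢 {R, T} := by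
  obtain ⟨hS, hT, hR, hST, -, hTR, -⟩ := mem_rainbowConfigs.1 hq
  obtain ⟨hSneT, -, hTneR⟩ := ne_of_mem_rainbowConfigs hq
  exact ⟨isBowtie_pair_iff.2 ⟨hS, hT, hSneT, by simp [hST]⟩,
    isBowtie_pair_iff.2 ⟨hR, hT, hTneR.symm, inter_comm T R ▸ hTR⟩⟩

theorem bowtieGraph_adj_of_mem_rainbowConfigs {u : V} {S T R : Finset V}
    (hq : (S, T, R) ∈ rainbowConfigs 𝒢 u) :
    (bowtieGraph 𝒢).Adj ⟨{S, T}, (isBowtie_of_mem_rainbowConfigs hq).1⟩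
      ⟨{R, T}, (isBowtie_of_mem_rainbowConfigs hq).2⟩ := by
  obtain ⟨-, -, -, hST, hSR, -, huR⟩ := mem_rainbowConfigs.1 hq
  obtain ⟨hSneT, hSneR, -⟩ := ne_of_mem_rainbowConfigs hq
  refine ⟨fun h => ?_, S, R, T, rfl, rfl, hSR, ?_⟩
  · rcases pair_eq_pair_iff.1 (congrArg Subtype.val h) with ⟨h', -⟩ | ⟨h', -⟩
    exacts [hSneR h', hSneT h']
  · rw [inter_right_comm, hST]
    exact singleton_inter_of_notMem huR

theorem eq_of_pair_eq_of_mem_rainbowConfigs {u : V} {S T R S' T' R' : Finset V}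
    (hq : (S, T, R) ∈ rainbowConfigs 𝒢 u) (hST : ({S, T} : Finset (Finset V)) = {S', T'})
    (hRT : ({R, T} : Finset (Finset V)) = {R', T'}) : (S, T, R) = (S', T', R') := by
  obtain ⟨hSneT, hSneR, hTneR⟩ := ne_of_mem_rainbowConfigs hq
  rcases pair_eq_pair_iff.1 hST with ⟨rfl, rfl⟩ | ⟨rfl, rfl⟩ <;>
    rcases pair_eq_pair_iff.1 hRT with ⟨rfl, hT⟩ | ⟨rfl, rfl⟩
  all_goals first | rfl | simp_all

theorem exists_mem_rainbowConfigs_of_adj {u : V} {b b' : {b : Finset (Finset V) // IsBowtie 𝒢 b}}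
    (hb : ∃ S T : Finset V, (b : Finset (Finset V)) = {S, T} ∧ S ∩ T = {u})
    (hbb' : (bowtieGraph 𝒢).Adj b b') :
    ∃ S T R, (S, T, R) ∈ rainbowConfigs 𝒢 u ∧
      (b : Finset (Finset V)) = {S, T} ∧ (b' : Finset (Finset V)) = {R, T} := by
  obtain ⟨A, B, hbAB, hAB⟩ := hb
  obtain ⟨-, S, R, T, hb, hb', hSR, hSRT⟩ := hbb'
  obtain ⟨hS, hT, -, -⟩ := isBowtie_pair_iff.1 (hb ▸ b.2 : IsBowtie 𝒢 {S, T})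
  obtain ⟨hR, -, -, hRT⟩ := isBowtie_pair_iff.1 (hb' ▸ b'.2 : IsBowtie 𝒢 {R, T})
  have hST : S ∩ T = {u} := inter_eq_inter_of_pair_eq (hb.symm.trans hbAB) ▸ hAB
  have huR : u ∉ R := by
    intro huR
    have : u ∈ S ∩ R ∩ T := by
      rw [inter_right_comm, hST]
      exact mem_inter.2 ⟨mem_singleton_self u, huR⟩
    rw [hSRT] at this
    exact notMem_empty u this
  exact ⟨S, T, R, mem_rainbowConfigs.2 ⟨hS, hT, hR, hST, hSR, inter_comm R T ▸ hRT, huR⟩, hb, hb'⟩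

variable [Fintype V]

noncomputable def rainbowTriangles (𝒢 : Finset (Finset V)) (u : V) : Finset (Finset V) :=
  (((underlyingGraph 𝒢).cliqueFinset 3).filter fun t => u ∈ t).filter
    fun t => ¬ ∃ e ∈ 𝒢, t ⊆ e

theorem configTriangle_mem_rainbowTriangles (h𝒢 : Linear 𝒢) {u : V} {S T R : Finset V}
    (hq : (S, T, R) ∈ rainbowConfigs 𝒢 u) : configTriangle u (S, T, R) ∈ rainbowTriangles 𝒢 u := by
  obtain ⟨x, y, hux, huy, hxy, huS, huT, hxS, hxR, hyT, hyR, ht⟩ := exists_vertices_of_mem_rainbowConfigs hq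
  obtain ⟨hS, hT, hR, hST, -⟩ := mem_rainbowConfigs.1 hq
  simp only [rainbowTriangles, mem_filter, SimpleGraph.mem_cliqueFinset_iff, ht]
  refine ⟨⟨SimpleGraph.is3Clique_triple_iff.2
    ⟨⟨hux, S, hS, huS, hxS⟩, ⟨huy, T, hT, huT, hyT⟩, ⟨hxy, R, hR, hxR, hyR⟩⟩, mem_insert_self _ _⟩,
    ?_⟩
  rintro ⟨e, he, hsub⟩
  rw [insert_subset_iff, insert_subset_iff, singleton_subset_iff] at hsub
  obtain ⟨hue, hxe, hye⟩ := hsub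
  have hyST : y ∈ S ∩ T := mem_inter.2 ⟨h𝒢.eq_of_mem_of_mem he hS hux hue hxe huS hxS ▸ hye, hyT⟩
  rw [hST, mem_singleton] at hyST
  exact huy hyST.symm

theorem exists_mem_rainbowConfigs_of_mem_rainbowTriangles (h𝒢 : Linear 𝒢) {u : V}
    {t : Finset V} (ht : t ∈ rainbowTriangles 𝒢 u) :
    ∃ S T R, (S, T, R) ∈ rainbowConfigs 𝒢 u ∧ configTriangle u (S, T, R) = t := by
  simp only [rainbowTriangles, mem_filter, SimpleGraph.mem_cliqueFinset_iff] at ht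
  obtain ⟨⟨hclique, hut⟩, hrainbow⟩ := ht
  obtain ⟨x, y, hxy, hxy_eq⟩ : ∃ x y, x ≠ y ∧ t.erase u = {x, y} :=
    card_eq_two.1 (by rw [card_erase_of_mem hut, hclique.card_eq])
  have hux : u ≠ x := (ne_of_mem_erase (by simp [hxy_eq] : x ∈ t.erase u)).symm
  have huy : u ≠ y := (ne_of_mem_erase (by simp [hxy_eq] : y ∈ t.erase u)).symm
  have ht : t = {u, x, y} := by rw [← hxy_eq, insert_erase hut]
  subst ht
  obtain ⟨⟨-, S, hS, huS, hxS⟩, ⟨-, T, hT, huT, hyT⟩, ⟨-, R, hR, hxR, hyR⟩⟩ :=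
    SimpleGraph.is3Clique_triple_iff.1 hclique
  have not_subset {e : Finset V} (he : e ∈ 𝒢) (hu : u ∈ e) (hx : x ∈ e) (hy : y ∈ e) : False :=
    hrainbow ⟨e, he, by simp [insert_subset_iff, *]⟩
  have hST : S ≠ T := by rintro rfl; exact not_subset hS huS hxS hyT
  have hSR : S ≠ R := by rintro rfl; exact not_subset hS huS hxS hyR
  have hTR : T ≠ R := by rintro rfl; exact not_subset hT huT hxR hyT
  have hSRx := h𝒢.inter_eq_singleton hS hR hSR hxS hxR
  have hTRy := h𝒢.inter_eq_singleton hT hR hTR hyT hyR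
  refine ⟨S, T, R, mem_rainbowConfigs.2 ⟨hS, hT, hR, h𝒢.inter_eq_singleton hS hT hST huS huT,
    by simp [hSRx], by simp [hTRy], fun huR => not_subset hR huR hxR hyR⟩, ?_⟩
  rw [configTriangle, union_inter_distrib_right, hSRx, hTRy]
  rfl

theorem card_rainbowConfigs (h𝒢 : Linear 𝒢) (u : V) :
    #(rainbowConfigs 𝒢 u) = 2 * #(rainbowTriangles 𝒢 u) := by
  rw [card_eq_sum_card_fiberwise (f := configTriangle u) (t := rainbowTriangles 𝒢 u)
    fun q hq => configTriangle_mem_rainbowTriangles h𝒢 hq, mul_comm, ← smul_eq_mul,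
    ← sum_const]
  refine sum_congr rfl fun t ht => ?_
  obtain ⟨S, T, R, hq, rfl⟩ := exists_mem_rainbowConfigs_of_mem_rainbowTriangles h𝒢 ht
  have hfiber : (rainbowConfigs 𝒢 u).filter
      (fun q => configTriangle u q = configTriangle u (S, T, R)) = {(S, T, R), (T, S, R)} := by
    ext ⟨S', T', R'⟩
    simp only [mem_filter, mem_insert, mem_singleton]
    constructor
    · exact fun ⟨hq', h⟩ => eq_or_eq_swap_of_configTriangle_eq h𝒢 hq hq' h
    · rintro (h | h) <;> rw [h]
      · exact ⟨hq, rfl⟩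
      · exact ⟨swap_mem_rainbowConfigs hq, configTriangle_swap u S T R⟩
  rw [hfiber, card_pair fun h => (ne_of_mem_rainbowConfigs hq).1 (congrArg Prod.fst h)]

noncomputable def bowtiesAt (𝒢 : Finset (Finset V)) (u : V) :
    Finset {b : Finset (Finset V) // IsBowtie 𝒢 b} :=
  Finset.univ.filter fun b => ∃ S T : Finset V, (b : Finset (Finset V)) = {S, T} ∧ S ∩ T = {u}

theorem card_rainbowConfigs_eq_card_sigma (u : V) :
    #(rainbowConfigs 𝒢 u) =
      #((bowtiesAt 𝒢 u).sigma fun b => (bowtieGraph 𝒢).neighborFinset b) := by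
  refine card_bij (fun q hq => ⟨⟨{q.1, q.2.1}, (isBowtie_of_mem_rainbowConfigs hq).1⟩,
    ⟨{q.2.2, q.2.1}, (isBowtie_of_mem_rainbowConfigs hq).2⟩⟩) ?_ ?_ ?_
  · rintro ⟨S, T, R⟩ hq
    simp only [bowtiesAt, mem_sigma, mem_filter, mem_univ, true_and,
      SimpleGraph.mem_neighborFinset]
    exact ⟨⟨S, T, rfl, (mem_rainbowConfigs.1 hq).2.2.2.1⟩, bowtieGraph_adj_of_mem_rainbowConfigs hq⟩
  · rintro ⟨S, T, R⟩ hq ⟨S', T', R'⟩ _ h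
    simp only [Sigma.mk.injEq, Subtype.mk.injEq, heq_eq_eq] at h
    exact eq_of_pair_eq_of_mem_rainbowConfigs hq h.1 h.2
  · rintro ⟨b, b'⟩ hp
    simp only [bowtiesAt, mem_sigma, mem_filter, mem_univ, true_and,
      SimpleGraph.mem_neighborFinset] at hp
    obtain ⟨S, T, R, hq, hb, hb'⟩ := exists_mem_rainbowConfigs_of_adj hp.1 hp.2
    exact ⟨(S, T, R), hq, Sigma.ext (Subtype.ext hb.symm) (heq_of_eq (Subtype.ext hb'.symm))⟩

theorem card_triangles_subset_edge (h𝒢 : Linear 𝒢) {r : ℕ} (hunif : Uniform r 𝒢) (u : V) :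
    #((((underlyingGraph 𝒢).cliqueFinset 3).filter fun t => u ∈ t).filter
        fun t => ∃ e ∈ 𝒢, t ⊆ e) = #(𝒢.filter fun e => u ∈ e) * (r - 1).choose 2 := by
  have hunion : (((underlyingGraph 𝒢).cliqueFinset 3).filter fun t => u ∈ t).filter
      (fun t => ∃ e ∈ 𝒢, t ⊆ e) =
        (𝒢.filter fun e => u ∈ e).biUnion fun e => (e.powersetCard 3).filter ({u} ⊆ ·) := by
    ext t
    simp only [mem_filter, mem_biUnion, mem_powersetCard, SimpleGraph.mem_cliqueFinset_iff,
      singleton_subset_iff]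
    constructor
    · rintro ⟨⟨ht, hut⟩, e, he, hte⟩
      exact ⟨e, ⟨he, hte hut⟩, ⟨hte, ht.card_eq⟩, hut⟩
    · rintro ⟨e, ⟨he, -⟩, ⟨hte, hcard⟩, hut⟩
      exact ⟨⟨isNClique_of_subset_of_mem he hte hcard, hut⟩, e, he, hte⟩
  rw [hunion, card_biUnion, sum_const_nat]
  · intro e he
    obtain ⟨he, hue⟩ := mem_filter.1 he
    rw [card_filter_powersetCard_subset _ _ _ (singleton_subset_iff.2 hue) (by simp),
      card_singleton, hunif e he]
  · intro e he e' he' hne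
    refine disjoint_left.2 fun t ht ht' => ?_
    simp only [mem_filter, mem_powersetCard, mem_coe] at he he' ht ht'
    have := card_le_card (subset_inter ht.1.1 ht'.1.1)
    have := h𝒢 e he.1 e' he'.1 hne
    omega

end

theorem stmt_10_general {V : Type*} [Fintype V] [DecidableEq V] (r : ℕ)
    (𝒢 : Finset (Finset V)) (hlin : Linear 𝒢) (hunif : Uniform r 𝒢) (u : V) :
    ∑ b ∈ Finset.univ.filter
        (fun b : {b : Finset (Finset V) // IsBowtie 𝒢 b} =>
          ∃ S T : Finset V, (b : Finset (Finset V)) = {S, T} ∧ S ∩ T = {u}),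
        ((bowtieGraph 𝒢).degree b : ℤ) =
      2 * (((((underlyingGraph 𝒢).cliqueFinset 3).filter (fun t => u ∈ t)).card : ℤ)
        - ((r - 1).choose 2 : ℤ) * ((𝒢.filter (fun e => u ∈ e)).card : ℤ)) := by
  have hdeg : ∑ b ∈ bowtiesAt 𝒢 u, (bowtieGraph 𝒢).degree b = 2 * #(rainbowTriangles 𝒢 u) := by
    simp only [← SimpleGraph.card_neighborFinset_eq_degree]
    rw [← card_sigma, ← card_rainbowConfigs_eq_card_sigma, card_rainbowConfigs hlin]
  have hsplit := card_filter_add_card_filter_not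
    (s := ((underlyingGraph 𝒢).cliqueFinset 3).filter fun t => u ∈ t) (fun t => ∃ e ∈ 𝒢, t ⊆ e)
  rw [card_triangles_subset_edge hlin hunif] at hsplit
  change ∑ b ∈ bowtiesAt 𝒢 u, _ = _
  rw [← hsplit]
  push_cast [← Nat.cast_sum, hdeg, rainbowTriangles]
  ring

/-- For every vertex `u` of a linear `r`-graph `𝒢`,
`Σ_{b ∈ B_u} d_B(b) = 2·(t_u - C(r-1,2)·d_𝒢(u))`, where `t_u` is the number of
triangles of the underlying graph containing `u`, `B_u` is the set of bowties
with centre `u`, and `d_𝒢(u)` is the number of hyperedges containing `u`. -/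
theorem stmt_10 {V : Type*} [Fintype V] [DecidableEq V] (r : ℕ) (hr : 3 ≤ r)
    (𝒢 : Finset (Finset V)) (hlin : Linear 𝒢) (hunif : Uniform r 𝒢) (u : V) :
    ∑ b ∈ Finset.univ.filter
        (fun b : {b : Finset (Finset V) // IsBowtie 𝒢 b} =>
          ∃ S T : Finset V, (b : Finset (Finset V)) = {S, T} ∧ S ∩ T = {u}),
        ((bowtieGraph 𝒢).degree b : ℤ) =
      2 * (((((underlyingGraph 𝒢).cliqueFinset 3).filter (fun t => u ∈ t)).card : ℤ)
        - ((r - 1).choose 2 : ℤ) * ((𝒢.filter (fun e => u ∈ e)).card : ℤ)) :=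
  stmt_10_general r 𝒢 hlin hunif u
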